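/- Let E0 > 0 and set C23 = 2(2 + E0 + √(E0(E0+4))). Suppose γ_n > 0 with γ_n → 0, μ_n > 0 with γ_n²/μ_n → C23, and for each n the pair (q_n, ν_n) with ν_n > 0 and −1 < q_n < 0 solves the transition system (A)–(B) for the parameters (E0, γ_n, μ_n), with q_n → −1. Then ν_n → 0 and ν_n³/γ_n⁴ → 27/((E0+4)·C23); equivalently, the corresponding transition frequencies ω_n = E1(γ_n) + ν_n satisfy (ω_n − E0)/γ_n^{4/3} → 3/((E0+4)·C23)^{1/3}. -/

import Mathlib

open Filter

/-- The unique positive root of `ε² + (E0+4)ε - γ² = 0`. -/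
noncomputable def epsPar (E0 γ : ℝ) : ℝ :=
  (-(E0 + 4) + Real.sqrt ((E0 + 4)^2 + 4 * γ^2)) / 2

/-- `E1 = E0 + ε`. -/
noncomputable def E1Par (E0 γ : ℝ) : ℝ := E0 + epsPar E0 γ

/-- `a = 4 + E0 + ε`. -/
noncomputable def aPar (E0 γ : ℝ) : ℝ := 4 + E0 + epsPar E0 γ

/-- Equation (A) of the transition system:
`(1-q)(1+q) = 12γ⁴ / (ν² (ν+E1) (ν+a+ε)²)`. -/
def EqA (E0 γ q ν : ℝ) : Prop :=
  (1 - q) * (1 + q) =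
    12 * γ^4 / (ν^2 * (ν + E1Par E0 γ) * (ν + aPar E0 γ + epsPar E0 γ)^2)

/-- Equation (B) of the transition system:
`(2+q)²/(1+q) = (9/2)(μ/γ²)(ν+a)²(ν+E1)/(ν(ν+a+ε))`. -/
def EqB (E0 γ μ q ν : ℝ) : Prop :=
  (2 + q)^2 / (1 + q) =
    (9/2) * (μ / γ^2) * ((ν + aPar E0 γ)^2 * (ν + E1Par E0 γ)) /
      (ν * (ν + aPar E0 γ + epsPar E0 γ))

/-!
Multiplying (A) by (B) eliminates `1 + q` and `ν + E1`, leaving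
`(2+q)²(1-q) ν³ (ν+a+ε)³ = 54 μ γ² (ν+a)²`.
Since `(2+q)²(1-q) ≥ 2` on `[-1, 0]` and `ν + a ≥ E0 + 4`, this bounds `ν³` by a multiple of
`μγ² = (μ/γ²) γ⁴ → 0`, so `ν → 0`. Then `ε ≤ γ²/(E0+4)` tends to `0`, and dividing the identity
by `γ⁴` gives `ν³/γ⁴ → 54 (E0+4)² / (C23 · 2 (E0+4)³)`. Finally `ε = O(γ²)` is negligible against
`γ^{4/3}`, so `(ω - E0)/γ^{4/3} = ε/γ^{4/3} + (ν³/γ⁴)^{1/3}` has the cube-root limit.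
-/

open Topology

theorem epsPar_nonneg (E0 γ : ℝ) : 0 ≤ epsPar E0 γ := by
  have : E0 + 4 ≤ √((E0 + 4) ^ 2 + 4 * γ ^ 2) := Real.le_sqrt_of_sq_le (by nlinarith)
  unfold epsPar; linarith

theorem epsPar_sq_add_mul (E0 γ : ℝ) : epsPar E0 γ ^ 2 + (E0 + 4) * epsPar E0 γ = γ ^ 2 := by
  have hs := Real.sq_sqrt (by positivity : 0 ≤ (E0 + 4) ^ 2 + 4 * γ ^ 2)
  unfold epsPar; linear_combination hs / 4

theorem epsPar_le_sq_div {E0 : ℝ} (γ : ℝ) (hE : 0 < E0 + 4) : epsPar E0 γ ≤ γ ^ 2 / (E0 + 4) := by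
  rw [le_div_iff₀ hE]
  linarith [epsPar_sq_add_mul E0 γ, sq_nonneg (epsPar E0 γ)]

theorem tendsto_epsPar_div_rpow {E0 p : ℝ} (hE : 0 < E0 + 4) (hp : p < 2) :
    Tendsto (fun γ => epsPar E0 γ / γ ^ p) (𝓝[>] 0) (𝓝 0) := by
  have hbound : Tendsto (fun γ : ℝ => γ ^ (2 - p) / (E0 + 4)) (𝓝[>] 0) (𝓝 0) := by
    refine tendsto_nhdsWithin_of_tendsto_nhds ?_
    have := (Real.continuousAt_rpow_const 0 (2 - p) (Or.inr (by linarith))).tendsto.div_const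
      (E0 + 4)
    simpa [Real.zero_rpow (by linarith : 2 - p ≠ 0)] using this
  refine tendsto_of_tendsto_of_tendsto_of_le_of_le' tendsto_const_nhds hbound ?_ ?_
  · filter_upwards [self_mem_nhdsWithin] with γ (hγ : 0 < γ)
    exact div_nonneg (epsPar_nonneg E0 γ) (Real.rpow_nonneg hγ.le p)
  · filter_upwards [self_mem_nhdsWithin] with γ (hγ : 0 < γ)
    calc epsPar E0 γ / γ ^ p ≤ γ ^ 2 / (E0 + 4) / γ ^ p := by
          gcongr; exact epsPar_le_sq_div γ hE
      _ = γ ^ (2 - p) / (E0 + 4) := by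
          rw [Real.rpow_sub hγ, Real.rpow_two]; ring

theorem two_le_sq_two_add_mul_one_sub {q : ℝ} (h1 : -1 ≤ q) (h0 : q ≤ 0) :
    2 ≤ (2 + q) ^ 2 * (1 - q) := by
  nlinarith [mul_nonneg (by linarith : 0 ≤ q + 1) (by nlinarith : 0 ≤ 2 - 2 * q - q ^ 2)]

section TransitionSystem

variable {E0 γ μ q ν : ℝ}

theorem transition_identity (hE0 : 0 ≤ E0) (hγ : γ ≠ 0) (hν : 0 < ν) (hq : -1 < q)
    (hA : EqA E0 γ q ν) (hB : EqB E0 γ μ q ν) :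
    (2 + q) ^ 2 * (1 - q) * ν ^ 3 * (ν + aPar E0 γ + epsPar E0 γ) ^ 3 =
      54 * μ * γ ^ 2 * (ν + aPar E0 γ) ^ 2 := by
  have hε := epsPar_nonneg E0 γ
  unfold EqA at hA
  unfold EqB at hB
  unfold E1Par aPar at *
  set e := epsPar E0 γ
  have h1 : 0 < ν + (E0 + e) := by linarith
  have h2 : 0 < ν + (4 + E0 + e) + e := by linarith
  have h3 : 1 + q ≠ 0 := by linarith
  rw [eq_div_iff (by positivity)] at hA
  rw [div_eq_div_iff h3 (by positivity)] at hB
  field_simp at hB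
  refine mul_right_cancel₀ (by positivity : 2 * γ ^ 2 ≠ 0) ?_
  linear_combination (1 - q) * ν ^ 2 * (ν + (4 + E0 + e) + e) ^ 2 * hB +
    9 * μ * (ν + (4 + E0 + e)) ^ 2 * hA

theorem pow_three_le_of_transition (hE0 : 0 ≤ E0) (hγ : γ ≠ 0) (hν : 0 < ν)
    (hq : -1 < q ∧ q < 0) (hA : EqA E0 γ q ν) (hB : EqB E0 γ μ q ν) :
    ν ^ 3 ≤ 27 * μ * γ ^ 2 / (E0 + 4) := by
  have hidentity := transition_identity hE0 hγ hν hq.1 hA hB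
  set A := ν + aPar E0 γ
  set S := A + epsPar E0 γ
  have hA4 : E0 + 4 ≤ A := by
    have := epsPar_nonneg E0 γ
    simp only [A, aPar]; linarith
  have hAS : A ≤ S := le_add_of_nonneg_right (epsPar_nonneg E0 γ)
  have hApos : 0 < A := by linarith
  have hS : (E0 + 4) * A ^ 2 ≤ S ^ 3 :=
    calc (E0 + 4) * A ^ 2 ≤ A * A ^ 2 := by gcongr
      _ = A ^ 3 := by ring
      _ ≤ S ^ 3 := by gcongr
  have hmul : (ν ^ 3 * (E0 + 4)) * A ^ 2 ≤ (27 * μ * γ ^ 2) * A ^ 2 := by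
    have hf := two_le_sq_two_add_mul_one_sub hq.1.le hq.2.le
    have := mul_le_mul hf (mul_le_mul_of_nonneg_left hS (by positivity : 0 ≤ ν ^ 3))
      (by positivity) (by linarith)
    linear_combination this / 2 + hidentity / 2
  rw [le_div_iff₀ (by linarith)]
  exact le_of_mul_le_mul_right hmul (by positivity)

theorem pow_three_div_pow_four_eq (hE0 : 0 ≤ E0) (hγ : γ ≠ 0) (hν : 0 < ν)
    (hq : -1 < q ∧ q < 1) (hA : EqA E0 γ q ν) (hB : EqB E0 γ μ q ν) :
    ν ^ 3 / γ ^ 4 = 54 * (μ / γ ^ 2) * (ν + aPar E0 γ) ^ 2 /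
      ((2 + q) ^ 2 * (1 - q) * (ν + aPar E0 γ + epsPar E0 γ) ^ 3) := by
  have hS : 0 < ν + aPar E0 γ + epsPar E0 γ := by
    have := epsPar_nonneg E0 γ
    unfold aPar; linarith
  have h2q : 0 < 2 + q := by linarith
  have h1q : 0 < 1 - q := by linarith
  field_simp
  linear_combination transition_identity hE0 hγ hν hq.1 hA hB

end TransitionSystem

theorem omega_sub_div_rpow_eq {γ ν : ℝ} (E0 : ℝ) (hγ : 0 < γ) (hν : 0 < ν) :
    (E1Par E0 γ + ν - E0) / γ ^ ((4 : ℝ) / 3) =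
      epsPar E0 γ / γ ^ ((4 : ℝ) / 3) + (ν ^ 3 / γ ^ 4) ^ ((1 : ℝ) / 3) := by
  have hcube : (ν ^ 3 / γ ^ 4) ^ ((1 : ℝ) / 3) = ν / γ ^ ((4 : ℝ) / 3) := by
    rw [Real.div_rpow (by positivity) (by positivity), ← Real.rpow_natCast ν 3,
      ← Real.rpow_natCast γ 4, ← Real.rpow_mul hν.le, ← Real.rpow_mul hγ.le]
    norm_num
  rw [hcube, ← add_div]
  unfold E1Par
  ring_nf

theorem three_div_rpow_one_third {x : ℝ} (hx : 0 < x) :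
    3 / x ^ ((1 : ℝ) / 3) = (27 / x) ^ ((1 : ℝ) / 3) := by
  rw [Real.div_rpow (by norm_num) hx.le, show (27 : ℝ) = 3 ^ (3 : ℝ) by norm_num,
    ← Real.rpow_mul (by norm_num)]
  norm_num

section TransitionSequences

variable {E0 : ℝ} {γ μ q ν : ℕ → ℝ}

theorem tendsto_nhds_zero_of_transition {L : ℝ} (hE0 : 0 ≤ E0) (hγpos : ∀ n, 0 < γ n)
    (hγ0 : Tendsto γ atTop (𝓝 0)) (hμγ : Tendsto (fun n => μ n / γ n ^ 2) atTop (𝓝 L))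
    (hνpos : ∀ n, 0 < ν n) (hq : ∀ n, -1 < q n ∧ q n < 0)
    (hA : ∀ n, EqA E0 (γ n) (q n) (ν n)) (hB : ∀ n, EqB E0 (γ n) (μ n) (q n) (ν n)) :
    Tendsto ν atTop (𝓝 0) := by
  have hbound : Tendsto (fun n => 27 * μ n * γ n ^ 2 / (E0 + 4)) atTop (𝓝 0) := by
    have := ((hμγ.mul (hγ0.pow 4)).const_mul 27).div_const (E0 + 4)
    rw [zero_pow four_ne_zero, mul_zero, mul_zero, zero_div] at this
    refine this.congr fun n => ?_
    have := (hγpos n).ne'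
    field_simp
  have hν3 : Tendsto (fun n => ν n ^ 3) atTop (𝓝 0) :=
    tendsto_of_tendsto_of_tendsto_of_le_of_le tendsto_const_nhds hbound
      (fun n => (pow_pos (hνpos n) 3).le)
      (fun n => pow_three_le_of_transition hE0 (hγpos n).ne' (hνpos n) (hq n) (hA n) (hB n))
  have := hν3.rpow_const (p := ((3 : ℕ) : ℝ)⁻¹) (.inr (by positivity))
  rw [Real.zero_rpow (by norm_num)] at this
  exact this.congr fun n => Real.pow_rpow_inv_natCast (hνpos n).le three_ne_zero

theorem tendsto_pow_three_div_pow_four_of_transition {L : ℝ} (hE0 : 0 ≤ E0)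
    (hγpos : ∀ n, 0 < γ n) (hμγ : Tendsto (fun n => μ n / γ n ^ 2) atTop (𝓝 L))
    (hε : Tendsto (fun n => epsPar E0 (γ n)) atTop (𝓝 0))
    (hνpos : ∀ n, 0 < ν n) (hν : Tendsto ν atTop (𝓝 0)) (hq : ∀ n, -1 < q n ∧ q n < 1)
    (hqm1 : Tendsto q atTop (𝓝 (-1)))
    (hA : ∀ n, EqA E0 (γ n) (q n) (ν n)) (hB : ∀ n, EqB E0 (γ n) (μ n) (q n) (ν n)) :
    Tendsto (fun n => ν n ^ 3 / γ n ^ 4) atTop (𝓝 (27 * L / (E0 + 4))) := by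
  have hνa : Tendsto (fun n => ν n + aPar E0 (γ n)) atTop (𝓝 (E0 + 4)) := by
    simpa [aPar, add_comm] using hν.add (hε.const_add (4 + E0))
  have hf : Tendsto (fun n => (2 + q n) ^ 2 * (1 - q n)) atTop (𝓝 2) := by
    convert ((hqm1.const_add 2).pow 2).mul (hqm1.const_sub 1) using 2
    norm_num
  have := ((hμγ.const_mul 54).mul (hνa.pow 2)).div (hf.mul ((hνa.add hε).pow 3))
    (by positivity)
  convert this.congr fun n => (pow_three_div_pow_four_eq hE0 (hγpos n).ne' (hνpos n)
    (hq n) (hA n) (hB n)).symm using 2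
  field_simp
  ring

end TransitionSequences

theorem omega1_asymptotics_at_omega23_bifurcation_general
    (E0 : ℝ) (hE0 : 0 < E0) (γ μ q ν : ℕ → ℝ)
    (C23 : ℝ) (hC23 : C23 = 2 * (2 + E0 + Real.sqrt (E0 * (E0 + 4))))
    (hγpos : ∀ n, 0 < γ n)
    (hγ0 : Tendsto γ atTop (nhds 0))
    (hpow : Tendsto (fun n => (γ n)^2 / μ n) atTop (nhds C23))
    (hνpos : ∀ n, 0 < ν n)
    (hq : ∀ n, -1 < q n ∧ q n < 0)
    (hA : ∀ n, EqA E0 (γ n) (q n) (ν n))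
    (hB : ∀ n, EqB E0 (γ n) (μ n) (q n) (ν n))
    (hqm1 : Tendsto q atTop (nhds (-1))) :
    Tendsto ν atTop (nhds 0) ∧
    Tendsto (fun n => (ν n)^3 / (γ n)^4) atTop (nhds (27 / ((E0 + 4) * C23))) ∧
    Tendsto (fun n => (E1Par E0 (γ n) + ν n - E0) / (γ n) ^ ((4:ℝ)/3)) atTop
        (nhds (3 / ((E0 + 4) * C23) ^ ((1:ℝ)/3))) := by
  have hE : 0 < E0 + 4 := by linarith
  have hC : 0 < C23 := by rw [hC23]; positivity
  have hγ : Tendsto γ atTop (𝓝[>] 0) := tendsto_nhdsWithin_iff.mpr ⟨hγ0, .of_forall hγpos⟩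
  have hε : Tendsto (fun n => epsPar E0 (γ n)) atTop (𝓝 0) := by
    simpa [Function.comp_def] using (tendsto_epsPar_div_rpow hE two_pos).comp hγ
  have hμγ : Tendsto (fun n => μ n / γ n ^ 2) atTop (𝓝 C23⁻¹) := by
    simpa only [inv_div] using hpow.inv₀ hC.ne'
  have hν := tendsto_nhds_zero_of_transition hE0.le hγpos hγ0 hμγ hνpos hq hA hB
  have hratio : Tendsto (fun n => ν n ^ 3 / γ n ^ 4) atTop (𝓝 (27 / ((E0 + 4) * C23))) := by
    convert tendsto_pow_three_div_pow_four_of_transition hE0.le hγpos hμγ hε hνpos hν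
      (fun n => ⟨(hq n).1, (hq n).2.trans one_pos⟩) hqm1 hA hB using 2
    field_simp
  refine ⟨hν, hratio, ?_⟩
  rw [three_div_rpow_one_third (by positivity), ← zero_add (_ ^ _)]
  exact (((tendsto_epsPar_div_rpow hE (by norm_num)).comp hγ).add
    (hratio.rpow_const (.inr (by norm_num)))).congr
    fun n => (omega_sub_div_rpow_eq E0 (hγpos n) (hνpos n)).symm

/-- at the ω2-ω3 bifurcation power law `γ²/μ → C23`, the transition
solutions with `q → -1` have `ν → 0` with `ν³/γ⁴ → 27/((E0+4) C23)`; equivalently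
`(ω - E0)/γ^{4/3} → 3/((E0+4) C23)^{1/3}` for `ω = E1 + ν`. -/
theorem omega1_asymptotics_at_omega23_bifurcation
    (E0 : ℝ) (hE0 : 0 < E0) (γ μ q ν : ℕ → ℝ)
    (C23 : ℝ) (hC23 : C23 = 2 * (2 + E0 + Real.sqrt (E0 * (E0 + 4))))
    (hγpos : ∀ n, 0 < γ n)
    (hγ0 : Tendsto γ atTop (nhds 0))
    (hμpos : ∀ n, 0 < μ n)
    (hpow : Tendsto (fun n => (γ n)^2 / μ n) atTop (nhds C23))
    (hνpos : ∀ n, 0 < ν n)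
    (hq : ∀ n, -1 < q n ∧ q n < 0)
    (hA : ∀ n, EqA E0 (γ n) (q n) (ν n))
    (hB : ∀ n, EqB E0 (γ n) (μ n) (q n) (ν n))
    (hqm1 : Tendsto q atTop (nhds (-1))) :
    Tendsto ν atTop (nhds 0) ∧
    Tendsto (fun n => (ν n)^3 / (γ n)^4) atTop (nhds (27 / ((E0 + 4) * C23))) ∧
    Tendsto (fun n => (E1Par E0 (γ n) + ν n - E0) / (γ n) ^ ((4:ℝ)/3)) atTop
        (nhds (3 / ((E0 + 4) * C23) ^ ((1:ℝ)/3))) :=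
  omega1_asymptotics_at_omega23_bifurcation_general E0 hE0 γ μ q ν C23 hC23 hγpos hγ0 hpow hνpos hq
    hA hB hqm1
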